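/- arXiv:1111.5160 — 3 statements merged into one kernel-verified Lean document; each statement's English description precedes it below -/
import Mathlib

section
/- Suppose for every c > 0 and every ρ > 0 there exists R ≥ ρ with f(R) ≤ a − e^{−cR}, where f : [0,∞) → (0,∞) is non-decreasing with limit a > 0 at infinity. Then it is impossible to have τ > 0 and R₀ > 0 such that f(R+τ) > a^{1/n} f(R)^{(n-1)/n} for all R ≥ R₀ (where n ≥ 2 is a fixed integer). -/
/-!
Put `θ = (n-1)/n`. The hypothesis says that `g = f / a` satisfies `g (R + τ) > g R ^ θ`, so along
the grid `R₀ + kτ` we get `g ≥ g R₀ ^ (θ ^ k) ≥ 1 + θ ^ k log (g R₀)`. Since `θ ^ k` decays like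
`exp (R log θ / τ)`, monotonicity gives `f R > a - exp (-c R)` for all large `R` as soon as
`0 < c < -log θ / τ`, contradicting the hypothesis on `f`.
-/

open Filter Real Topology

theorem MonotoneOn.apply_floor_grid_le {f : ℝ → ℝ} {b R₀ τ R : ℝ}
    (hf : MonotoneOn f (Set.Ici b)) (hb : b ≤ R₀) (hτ : 0 < τ) (hR : R₀ ≤ R) :
    f (R₀ + ⌊(R - R₀) / τ⌋₊ * τ) ≤ f R := by
  have hfloor : (⌊(R - R₀) / τ⌋₊ : ℝ) * τ ≤ R - R₀ :=
    (le_div_iff₀ hτ).1 (Nat.floor_le (div_nonneg (sub_nonneg.2 hR) hτ.le))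
  have hgrid : R₀ ≤ R₀ + ⌊(R - R₀) / τ⌋₊ * τ := le_add_of_nonneg_right (by positivity)
  exact hf (hb.trans hgrid) (hb.trans hR) (by linarith)

theorem Real.one_add_mul_log_le_rpow {x : ℝ} (hx : 0 < x) (t : ℝ) : 1 + t * log x ≤ x ^ t := by
  rw [rpow_def_of_pos hx, mul_comm, add_comm]
  exact add_one_le_exp _

theorem Real.rpow_one_sub_mul_rpow {a y : ℝ} (ha : 0 < a) (hy : 0 ≤ y) (θ : ℝ) :
    a ^ (1 - θ) * y ^ θ = a * (y / a) ^ θ := by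
  rw [div_rpow hy ha.le, rpow_sub ha, rpow_one]
  field_simp

theorem rpow_pow_le_of_rpow_le_succ {x : ℕ → ℝ} {θ : ℝ} (hθ : 0 ≤ θ) (hx₀ : 0 ≤ x 0)
    (hx : ∀ k, x k ^ θ ≤ x (k + 1)) (k : ℕ) : x 0 ^ (θ ^ k) ≤ x k := by
  induction k with
  | zero => simp
  | succ k ih =>
    calc x 0 ^ (θ ^ (k + 1)) = (x 0 ^ (θ ^ k)) ^ θ := by rw [pow_succ, rpow_mul hx₀]
      _ ≤ x k ^ θ := rpow_le_rpow (by positivity) ih hθ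
      _ ≤ x (k + 1) := hx k

theorem add_mul_log_mul_pow_le_of_rpow_le_succ {x : ℕ → ℝ} {a θ : ℝ} (ha : 0 < a) (hθ : 0 ≤ θ)
    (hx₀ : 0 < x 0) (hx_nonneg : ∀ k, 0 ≤ x k) (hx : ∀ k, a ^ (1 - θ) * x k ^ θ ≤ x (k + 1))
    (k : ℕ) : a + a * log (x 0 / a) * θ ^ k ≤ x k := by
  have hy : (x 0 / a) ^ (θ ^ k) ≤ x k / a := by
    refine rpow_pow_le_of_rpow_le_succ (x := fun k => x k / a) hθ (div_pos hx₀ ha).le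
      (fun k => ?_) k
    rw [le_div_iff₀ ha, mul_comm, ← rpow_one_sub_mul_rpow ha (hx_nonneg k)]
    exact hx k
  have := mul_le_mul_of_nonneg_left ((one_add_mul_log_le_rpow (div_pos hx₀ ha) _).trans hy) ha.le
  rw [mul_div_cancel₀ _ ha.ne'] at this
  linarith

theorem tendsto_pow_floor_mul_exp {θ τ c : ℝ} (hθ₀ : 0 < θ) (hθ₁ : θ < 1) (hτ : 0 < τ)
    (hc : c < -log θ / τ) (R₀ : ℝ) :
    Tendsto (fun R => θ ^ ⌊(R - R₀) / τ⌋₊ * exp (c * R)) atTop (𝓝 0) := by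
  have hslope : log θ / τ + c < 0 := by rw [neg_div] at hc; linarith
  have hexp : Tendsto (fun R => exp ((log θ / τ + c) * R + -(log θ * (R₀ / τ + 1))))
      atTop (𝓝 0) :=
    tendsto_exp_atBot.comp
      (tendsto_atBot_add_const_right _ _ (tendsto_id.const_mul_atTop_of_neg hslope))
  refine squeeze_zero (fun R => by positivity) (fun R => ?_) hexp
  have hfloor : θ ^ ⌊(R - R₀) / τ⌋₊ ≤ θ ^ ((R - R₀) / τ - 1) := by
    rw [← rpow_natCast]
    exact rpow_le_rpow_of_exponent_ge hθ₀ hθ₁.le (Nat.sub_one_lt_floor _).le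
  calc θ ^ ⌊(R - R₀) / τ⌋₊ * exp (c * R) ≤ θ ^ ((R - R₀) / τ - 1) * exp (c * R) := by
        gcongr
    _ = exp ((log θ / τ + c) * R + -(log θ * (R₀ / τ + 1))) := by
        rw [rpow_def_of_pos hθ₀, ← exp_add]
        congr 1
        field_simp
        ring

theorem eventually_mul_pow_floor_lt_exp {θ τ c : ℝ} (hθ₀ : 0 < θ) (hθ₁ : θ < 1) (hτ : 0 < τ)
    (hc : c < -log θ / τ) (R₀ C : ℝ) :
    ∀ᶠ R in atTop, C * θ ^ ⌊(R - R₀) / τ⌋₊ < exp (-c * R) := by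
  have hlim := (tendsto_pow_floor_mul_exp hθ₀ hθ₁ hτ hc R₀).const_mul C
  rw [mul_zero] at hlim
  filter_upwards [hlim.eventually (gt_mem_nhds one_pos)] with R hR
  calc C * θ ^ ⌊(R - R₀) / τ⌋₊ = C * (θ ^ ⌊(R - R₀) / τ⌋₊ * exp (c * R)) * exp (-c * R) := by
        rw [mul_assoc, mul_assoc, ← exp_add]; simp
    _ < 1 * exp (-c * R) := by gcongr
    _ = exp (-c * R) := one_mul _

theorem MonotoneOn.eventually_sub_exp_lt {f : ℝ → ℝ} {a b C θ τ c R₀ : ℝ}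
    (hf : MonotoneOn f (Set.Ici b)) (hb : b ≤ R₀) (hθ₀ : 0 < θ) (hθ₁ : θ < 1) (hτ : 0 < τ)
    (hc : c < -log θ / τ) (hgrid : ∀ k : ℕ, a + C * θ ^ k ≤ f (R₀ + k * τ)) :
    ∀ᶠ R in atTop, a - exp (-c * R) < f R := by
  filter_upwards [eventually_mul_pow_floor_lt_exp hθ₀ hθ₁ hτ hc R₀ (-C), eventually_ge_atTop R₀]
    with R hdecay hR
  linarith [hgrid ⌊(R - R₀) / τ⌋₊, hf.apply_floor_grid_le hb hτ hR]

theorem no_fast_growth_general {n : ℕ} (hn : 2 ≤ n) (a : ℝ) (ha : 0 < a) (f : ℝ → ℝ)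
    (hpos : ∀ R ≥ (0 : ℝ), 0 < f R)
    (hmono : MonotoneOn f (Set.Ici (0 : ℝ)))
    (h : ∀ c > (0 : ℝ), ∀ ρ > (0 : ℝ), ∃ R ≥ ρ, f R ≤ a - Real.exp (-c * R)) :
    ¬ ∃ τ > (0 : ℝ), ∃ R₀ > (0 : ℝ), ∀ R ≥ R₀,
        a ^ ((1 : ℝ) / n) * f R ^ (((n : ℝ) - 1) / n) < f (R + τ) := by
  rintro ⟨τ, hτ, R₀, hR₀, H⟩
  set θ : ℝ := ((n : ℝ) - 1) / n with hθ
  have hn' : (2 : ℝ) ≤ n := by exact_mod_cast hn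
  have hθ₀ : 0 < θ := div_pos (by linarith) (by linarith)
  have hθ₁ : θ < 1 := (div_lt_one (by linarith)).2 (by linarith)
  have hgrid_mem (k : ℕ) : R₀ ≤ R₀ + k * τ := le_add_of_nonneg_right (by positivity)
  have hstep (k : ℕ) : a ^ (1 - θ) * f (R₀ + k * τ) ^ θ ≤ f (R₀ + (k + 1 : ℕ) * τ) := by
    have hk := (H _ (hgrid_mem k)).le
    rw [show (1 : ℝ) / n = 1 - θ by rw [hθ]; field_simp; ring] at hk
    rwa [Nat.cast_succ, add_one_mul, ← add_assoc]
  have hgrid := add_mul_log_mul_pow_le_of_rpow_le_succ (x := fun k : ℕ => f (R₀ + k * τ)) ha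
    hθ₀.le (by simpa using hpos R₀ hR₀.le) (fun k => (hpos _ (hR₀.le.trans (hgrid_mem k))).le)
    hstep
  simp only [Nat.cast_zero, zero_mul, add_zero] at hgrid
  have hlogθ : 0 < -log θ := neg_pos.2 (log_neg hθ₀ hθ₁)
  have hc : 0 < -log θ / (2 * τ) := by positivity
  have hc' : -log θ / (2 * τ) < -log θ / τ :=
    (div_lt_div_iff_of_pos_left hlogθ (by positivity) hτ).2 (by linarith)
  obtain ⟨R₁, hR₁⟩ := eventually_atTop.1 <|
    hmono.eventually_sub_exp_lt hR₀.le hθ₀ hθ₁ hτ hc' hgrid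
  obtain ⟨R, hR, hfR⟩ := h _ hc (max R₁ R₀) (hR₀.trans_le (le_max_right _ _))
  linarith [hR₁ R ((le_max_left _ _).trans hR)]

/-- If `f : [0,∞) → (0,∞)` is non-decreasing with limit `a > 0` at infinity
and for every `c > 0`, `ρ > 0` there is `R ≥ ρ` with `f(R) ≤ a − e^{−cR}`, then there
cannot exist `τ > 0` and `R₀ > 0` with `f(R+τ) > a^{1/n} f(R)^{(n-1)/n}` for all `R ≥ R₀`. -/
theorem no_fast_growth {n : ℕ} (hn : 2 ≤ n) (a : ℝ) (ha : 0 < a) (f : ℝ → ℝ)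
    (hpos : ∀ R ≥ (0 : ℝ), 0 < f R)
    (hmono : MonotoneOn f (Set.Ici (0 : ℝ)))
    (hlim : Tendsto f atTop (nhds a))
    (h : ∀ c > (0 : ℝ), ∀ ρ > (0 : ℝ), ∃ R ≥ ρ, f R ≤ a - Real.exp (-c * R)) :
    ¬ ∃ τ > (0 : ℝ), ∃ R₀ > (0 : ℝ), ∀ R ≥ R₀,
        a ^ ((1 : ℝ) / n) * f R ^ (((n : ℝ) - 1) / n) < f (R + τ) :=
  no_fast_growth_general hn a ha f hpos hmono h
end

section
/- Let f be a radial non-decreasing density on ℝ², f(x) = g(|x|) with g non-decreasing, and let H ⊂ ℝ² be an open half-plane not containing the origin. Define α : ℝ² → ℝ² \ H as the identity outside H and as the orthogonal projection onto the boundary line ∂H inside H. Then α is 1-Lipschitz and f(α(x)) ≤ f(x) for every x ∈ ℝ²; consequently, for any Lipschitz curve γ, the weighted length ℓ(α∘γ) = ∫ f(α∘γ(t)) |(α∘γ)'(t)| dt satisfies ℓ(α∘γ) ≤ ℓ(γ). -/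
open MeasureTheory Set Filter
open scoped RealInnerProductSpace

noncomputable section

/-- The map of ℝ² which is the identity outside the open half-plane
`H = {x | ⟪u,x⟫ > d}` and the orthogonal projection onto the boundary line `∂H` inside it. -/
def halfPlaneProj (u : EuclideanSpace ℝ (Fin 2)) (d : ℝ) (x : EuclideanSpace ℝ (Fin 2)) :
    EuclideanSpace ℝ (Fin 2) :=
  if d < ⟪u, x⟫ then x - (⟪u, x⟫ - d) • u else x

lemma halfPlaneProj_eq (u : EuclideanSpace ℝ (Fin 2)) (d : ℝ) (x : EuclideanSpace ℝ (Fin 2)) :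
    halfPlaneProj u d x = x - max (⟪u, x⟫ - d) 0 • u := by
  unfold halfPlaneProj
  split_ifs with h
  · rw [max_eq_left (by linarith)]
  · rw [max_eq_right (by push_neg at h; linarith)]; simp

lemma relu_key (p q : ℝ) : (max p 0 - max q 0) ^ 2 ≤ (max p 0 - max q 0) * (p - q) := by
  rcases le_total p 0 with hp | hp <;> rcases le_total q 0 with hq | hq <;>
    simp [max_eq_right, max_eq_left, hp, hq] <;> nlinarith

lemma halfPlaneProj_lip (u : EuclideanSpace ℝ (Fin 2)) (hu : ‖u‖ = 1) (d : ℝ) :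
    LipschitzWith 1 (halfPlaneProj u d) := by
  refine LipschitzWith.of_dist_le_mul fun x y => ?_
  rw [dist_eq_norm, dist_eq_norm, NNReal.coe_one, one_mul, halfPlaneProj_eq, halfPlaneProj_eq]
  set a := max (⟪u, x⟫ - d) 0 with ha
  set b := max (⟪u, y⟫ - d) 0 with hb
  have key : (a - b) ^ 2 ≤ (a - b) * ((⟪u, x⟫ - d) - (⟪u, y⟫ - d)) := relu_key _ _
  have h1 : x - a • u - (y - b • u) = (x - y) - (a - b) • u := by
    rw [sub_smul]; abel
  rw [h1]
  have hsq : ‖(x - y) - (a - b) • u‖ ^ 2 ≤ ‖x - y‖ ^ 2 := by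
    rw [norm_sub_sq_real, real_inner_smul_right, norm_smul, hu]
    have hinner : ⟪x - y, u⟫ = ⟪u, x⟫ - ⟪u, y⟫ := by
      rw [inner_sub_left, real_inner_comm x u, real_inner_comm y u]
    rw [hinner]
    simp only [Real.norm_eq_abs, mul_one, mul_pow, sq_abs]
    nlinarith [sq_nonneg (a - b)]
  exact (pow_le_pow_iff_left₀ (norm_nonneg _) (norm_nonneg _) two_ne_zero).mp hsq

lemma halfPlaneProj_norm_le (u : EuclideanSpace ℝ (Fin 2)) (hu : ‖u‖ = 1) (d : ℝ)
    (hd : 0 ≤ d) (x : EuclideanSpace ℝ (Fin 2)) : ‖halfPlaneProj u d x‖ ≤ ‖x‖ := by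
  unfold halfPlaneProj
  split_ifs with h
  · have hsq : ‖x - (⟪u, x⟫ - d) • u‖ ^ 2 ≤ ‖x‖ ^ 2 := by
      rw [norm_sub_sq_real, real_inner_smul_right, norm_smul, hu]
      have : ⟪x, u⟫ = ⟪u, x⟫ := (real_inner_comm x u).symm
      rw [this]
      simp only [Real.norm_eq_abs, mul_one, mul_pow, sq_abs]
      nlinarith
    exact (pow_le_pow_iff_left₀ (norm_nonneg _) (norm_nonneg _) two_ne_zero).mp hsq
  · exact le_rfl

/-- derivative of a 1-Lipschitz post-composition has smaller norm. -/
lemma norm_deriv_comp_le {α : EuclideanSpace ℝ (Fin 2) → EuclideanSpace ℝ (Fin 2)}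
    (hα : LipschitzWith 1 α) {γ : ℝ → EuclideanSpace ℝ (Fin 2)} {t : ℝ}
    (hγ : DifferentiableAt ℝ γ t) (h : DifferentiableAt ℝ (fun s => α (γ s)) t) :
    ‖deriv (fun s => α (γ s)) t‖ ≤ ‖deriv γ t‖ := by
  have h1 := hasDerivAt_iff_tendsto_slope.mp h.hasDerivAt
  have h2 := hasDerivAt_iff_tendsto_slope.mp hγ.hasDerivAt
  refine le_of_tendsto_of_tendsto h1.norm h2.norm (Eventually.of_forall fun s => ?_)
  simp only [slope_def_module, norm_smul]
  gcongr
  have := hα.dist_le_mul (γ s) (γ t)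
  simpa [dist_eq_norm] using this

lemma norm_deriv_le_of_lip {K : NNReal} {γ : ℝ → EuclideanSpace ℝ (Fin 2)}
    (hγ : LipschitzWith K γ) (t : ℝ) : ‖deriv γ t‖ ≤ K := by
  by_cases h : DifferentiableAt ℝ γ t
  · have h1 := hasDerivAt_iff_tendsto_slope.mp h.hasDerivAt
    refine le_of_tendsto h1.norm (eventually_nhdsWithin_of_forall fun s hs => ?_)
    simp only [slope_def_module, norm_smul]
    have hst : s - t ≠ 0 := sub_ne_zero.mpr hs
    have := hγ.dist_le_mul s t
    rw [dist_eq_norm, dist_eq_norm] at this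
    calc ‖(s - t)⁻¹‖ * ‖γ s - γ t‖ ≤ ‖(s - t)⁻¹‖ * (K * ‖s - t‖) := by
          exact mul_le_mul_of_nonneg_left this (norm_nonneg _)
      _ = K := by
          rw [norm_inv]
          field_simp
  · simp [deriv_zero_of_not_differentiableAt h]

/-- For a radial non-decreasing density `f(x) = g(|x|)` on ℝ² and an open
half-plane `H = {⟪u,·⟫ > d}` (with `‖u‖ = 1`, `d ≥ 0`, so `0 ∉ H`), the projection `α`
onto the complement of `H` is 1-Lipschitz, decreases the density, and decreases the
weighted length of every Lipschitz curve. -/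
theorem halfPlaneProj_shortens (g : ℝ → ℝ) (hg : Monotone g)
    (hgpos : ∀ t : ℝ, 0 ≤ t → 0 < g t)
    (u : EuclideanSpace ℝ (Fin 2)) (hu : ‖u‖ = 1) (d : ℝ) (hd : 0 ≤ d) :
    LipschitzWith 1 (halfPlaneProj u d) ∧
      (∀ x : EuclideanSpace ℝ (Fin 2), g ‖halfPlaneProj u d x‖ ≤ g ‖x‖) ∧
      ∀ (γ : ℝ → EuclideanSpace ℝ (Fin 2)) (K : NNReal), LipschitzWith K γ →
        (∫ t in Icc (0 : ℝ) 1, g ‖halfPlaneProj u d (γ t)‖ *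
            ‖deriv (fun s => halfPlaneProj u d (γ s)) t‖) ≤
          ∫ t in Icc (0 : ℝ) 1, g ‖γ t‖ * ‖deriv γ t‖ := by
  have hlip := halfPlaneProj_lip u hu d
  refine ⟨hlip, fun x => hg (halfPlaneProj_norm_le u hu d hd x), ?_⟩
  intro γ K hγ
  have hαγ : LipschitzWith (1 * K) (fun s => halfPlaneProj u d (γ s)) := hlip.comp hγ
  -- pointwise a.e. inequality
  have hd1 : ∀ᵐ t : ℝ, DifferentiableAt ℝ γ t := hγ.ae_differentiableAt
  have hd2 : ∀ᵐ t : ℝ, DifferentiableAt ℝ (fun s => halfPlaneProj u d (γ s)) t :=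
    hαγ.ae_differentiableAt
  have hle : ∀ᵐ t : ℝ, g ‖halfPlaneProj u d (γ t)‖ *
      ‖deriv (fun s => halfPlaneProj u d (γ s)) t‖ ≤ g ‖γ t‖ * ‖deriv γ t‖ := by
    filter_upwards [hd1, hd2] with t h1 h2
    exact mul_le_mul (hg (halfPlaneProj_norm_le u hu d hd _))
      (norm_deriv_comp_le hlip h1 h2) (norm_nonneg _) (hgpos _ (norm_nonneg _)).le
  -- integrability of the RHS
  have hmeas : Measurable fun t => g ‖γ t‖ * ‖deriv γ t‖ :=
    (hg.measurable.comp hγ.continuous.norm.measurable).mul (measurable_deriv γ).norm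
  have hbound : ∀ t ∈ Icc (0 : ℝ) 1, ‖g ‖γ t‖ * ‖deriv γ t‖‖ ≤ g (‖γ 0‖ + K) * K := by
    intro t ht
    have hγt : ‖γ t‖ ≤ ‖γ 0‖ + K := by
      have := hγ.dist_le_mul t 0
      rw [dist_eq_norm] at this
      have h2 : ‖γ t‖ - ‖γ 0‖ ≤ ‖γ t - γ 0‖ := norm_sub_norm_le _ _
      have h3 : (K : ℝ) * dist t 0 ≤ K := by
        rw [Real.dist_eq, sub_zero, abs_of_nonneg ht.1]
        nlinarith [ht.2, K.coe_nonneg]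
      linarith
    rw [Real.norm_eq_abs, abs_of_nonneg
      (mul_nonneg (hgpos _ (norm_nonneg _)).le (norm_nonneg _))]
    exact mul_le_mul (hg hγt) (norm_deriv_le_of_lip hγ t)
      (norm_nonneg _) (hgpos _ (by positivity)).le
  have hint : IntegrableOn (fun t => g ‖γ t‖ * ‖deriv γ t‖) (Icc (0 : ℝ) 1) := by
    refine Integrable.mono' (integrable_const (g (‖γ 0‖ + K) * K))
      hmeas.aestronglyMeasurable ?_
    exact (ae_restrict_iff' measurableSet_Icc).mpr (ae_of_all _ hbound)
  refine integral_mono_of_nonneg (ae_of_all _ fun t => ?_) hint (ae_restrict_of_ae hle)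
  exact mul_nonneg (hgpos _ (norm_nonneg _)).le (norm_nonneg _)

end
end

section
/- Let f be a density on ℝⁿ with limit a > 0 at infinity and with isoperimetric profile 𝔍. Suppose F is a bounded isoperimetric set of weighted volume |F|_f = V − Ṽ with 𝔍(V) ≥ P_f(F) + n(ωₙ a)^{1/n} Ṽ^{(n-1)/n}, and suppose B is a ball disjoint from F with |B|_f = Ṽ and mean density at most a, i.e. P_f(B) ≤ n(ωₙ a)^{1/n} Ṽ^{(n-1)/n}. Then F ∪ B is an isoperimetric set of volume V: P_f(F ∪ B) = 𝔍(V). -/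
/-! Weighted volume and weighted perimeter are both additive on sets with disjoint closures: the
essential boundary of `F ∪ B` near a point of `closure F` only sees `F`, and vice versa. Hence
`F ∪ B` has weighted volume `V`, so `𝔍(V) ≤ P_f(F ∪ B) = P_f(F) + P_f(B)`, and the hypotheses on
`F` and `B` bound this sum by `𝔍(V)`. -/

open MeasureTheory Metric Filter Set
open scoped ENNReal Topology

noncomputable section

/-- Lebesgue measure of the unit ball in ℝⁿ (the constant ωₙ). -/
def unitBallVol (n : ℕ) : ℝ := (volume (ball (0 : EuclideanSpace ℝ (Fin n)) 1)).toReal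

/-- The essential boundary of a set `F ⊆ ℝⁿ`: points where the Lebesgue density of `F`
is neither 0 nor 1. -/
def essBoundary {n : ℕ} (F : Set (EuclideanSpace ℝ (Fin n))) :
    Set (EuclideanSpace ℝ (Fin n)) :=
  {x | ¬ Tendsto (fun r : ℝ => volume (F ∩ ball x r) / volume (ball x r))
        (nhdsWithin 0 (Ioi 0)) (nhds 0) ∧
       ¬ Tendsto (fun r : ℝ => volume (F ∩ ball x r) / volume (ball x r))
        (nhdsWithin 0 (Ioi 0)) (nhds 1)}

/-- Weighted volume `|E|_f = ∫_E f`. -/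
def wVol {n : ℕ} (f : EuclideanSpace ℝ (Fin n) → ℝ) (E : Set (EuclideanSpace ℝ (Fin n))) : ℝ≥0∞ :=
  ∫⁻ x in E, ENNReal.ofReal (f x)

/-- Weighted perimeter `P_f(E) = ∫_{∂*E} f dH^{n-1}`. -/
def wPer {n : ℕ} (f : EuclideanSpace ℝ (Fin n) → ℝ) (E : Set (EuclideanSpace ℝ (Fin n))) : ℝ≥0∞ :=
  ∫⁻ x in essBoundary E, ENNReal.ofReal (f x) ∂(μH[(n : ℝ) - 1])

/-- The isoperimetric profile `𝔍_f(V) = inf { P_f(E) : |E|_f = V }`. -/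
def isoProfile {n : ℕ} (f : EuclideanSpace ℝ (Fin n) → ℝ) (V : ℝ≥0∞) : ℝ≥0∞ :=
  sInf {p | ∃ E : Set (EuclideanSpace ℝ (Fin n)), MeasurableSet E ∧ wVol f E = V ∧ wPer f E = p}

/-- A density on ℝⁿ is non-decreasing if it is non-decreasing along every ray from the origin. -/
def RayNondecreasing {n : ℕ} (f : EuclideanSpace ℝ (Fin n) → ℝ) : Prop :=
  ∀ θ : EuclideanSpace ℝ (Fin n), ‖θ‖ = 1 → MonotoneOn (fun t : ℝ => f (t • θ)) (Set.Ici 0)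

variable {n : ℕ}

lemma mem_essBoundary_congr {F G : Set (EuclideanSpace ℝ (Fin n))} {x : EuclideanSpace ℝ (Fin n)}
    (h : ∀ᶠ r in 𝓝[>] (0 : ℝ), F ∩ ball x r = G ∩ ball x r) :
    x ∈ essBoundary F ↔ x ∈ essBoundary G := by
  have hEq : (fun r : ℝ => volume (F ∩ ball x r) / volume (ball x r))
      =ᶠ[𝓝[>] 0] fun r : ℝ => volume (G ∩ ball x r) / volume (ball x r) :=
    h.mono fun r hr => by dsimp only; rw [hr]
  simp only [essBoundary, mem_ofPred_eq, tendsto_congr' hEq]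

lemma eventually_inter_ball_eq_empty {B : Set (EuclideanSpace ℝ (Fin n))}
    {x : EuclideanSpace ℝ (Fin n)} (hx : x ∉ closure B) :
    ∀ᶠ r in 𝓝[>] (0 : ℝ), B ∩ ball x r = ∅ := by
  obtain ⟨ε, hε, hball⟩ := Metric.isOpen_iff.1 isClosed_closure.isOpen_compl x hx
  filter_upwards [Ioo_mem_nhdsGT hε] with r hr
  exact (disjoint_compl_right.mono subset_closure
    ((ball_subset_ball hr.2.le).trans hball)).inter_eq

lemma essBoundary_subset_closure (F : Set (EuclideanSpace ℝ (Fin n))) :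
    essBoundary F ⊆ closure F := by
  intro x hx
  by_contra hxF
  have hempty : ∀ᶠ r in 𝓝[>] (0 : ℝ), F ∩ ball x r = ∅ ∩ ball x r :=
    (eventually_inter_ball_eq_empty hxF).mono fun r hr => by rw [hr, empty_inter]
  refine ((mem_essBoundary_congr hempty).1 hx).1 ?_
  simp

lemma mem_essBoundary_union_iff_of_notMem_closure {F B : Set (EuclideanSpace ℝ (Fin n))}
    {x : EuclideanSpace ℝ (Fin n)} (hx : x ∉ closure B) :
    x ∈ essBoundary (F ∪ B) ↔ x ∈ essBoundary F :=
  mem_essBoundary_congr <| (eventually_inter_ball_eq_empty hx).mono fun r hr => by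
    rw [union_inter_distrib_right, hr, union_empty]

lemma essBoundary_union_of_disjoint_closure {F B : Set (EuclideanSpace ℝ (Fin n))}
    (hd : Disjoint (closure F) (closure B)) :
    essBoundary (F ∪ B) = essBoundary F ∪ essBoundary B := by
  ext x
  by_cases hxF : x ∈ closure F
  · have hxB : x ∉ closure B := hd.notMem_of_mem_left hxF
    rw [mem_union, mem_essBoundary_union_iff_of_notMem_closure hxB,
      or_iff_left fun h => hxB (essBoundary_subset_closure B h)]
  · rw [mem_union, union_comm, mem_essBoundary_union_iff_of_notMem_closure hxF,
      or_iff_right fun h => hxF (essBoundary_subset_closure F h)]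

lemma wVol_union (f : EuclideanSpace ℝ (Fin n) → ℝ) {F B : Set (EuclideanSpace ℝ (Fin n))}
    (hB : MeasurableSet B) (hd : Disjoint F B) :
    wVol f (F ∪ B) = wVol f F + wVol f B :=
  lintegral_union hB hd

lemma wPer_union_of_disjoint_closure (f : EuclideanSpace ℝ (Fin n) → ℝ)
    {F B : Set (EuclideanSpace ℝ (Fin n))} (hd : Disjoint (closure F) (closure B)) :
    wPer f (F ∪ B) = wPer f F + wPer f B := by
  have hinter : (essBoundary F ∪ essBoundary B) ∩ closure B = essBoundary B := by
    rw [union_inter_distrib_right, inter_eq_left.2 (essBoundary_subset_closure B),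
      (hd.mono_left (essBoundary_subset_closure F)).inter_eq, empty_union]
  have hdiff : (essBoundary F ∪ essBoundary B) \ closure B = essBoundary F := by
    rw [union_sdiff_distrib, sdiff_eq_empty.2 (essBoundary_subset_closure B), union_empty,
      sdiff_eq_left.2 (hd.mono_left (essBoundary_subset_closure F))]
  rw [wPer, essBoundary_union_of_disjoint_closure hd,
    ← lintegral_inter_add_sdiff _ _ isClosed_closure.measurableSet, hinter, hdiff, add_comm]
  rfl

lemma wPer_eq_isoProfile_of_le (f : EuclideanSpace ℝ (Fin n) → ℝ) {E : Set (EuclideanSpace ℝ (Fin n))}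
    {V : ℝ≥0∞} (hE : MeasurableSet E) (hvol : wVol f E = V) (hle : wPer f E ≤ isoProfile f V) :
    wPer f E = isoProfile f V :=
  hle.antisymm (sInf_le ⟨E, hE, hvol, rfl⟩)

theorem union_with_far_ball_is_isoperimetric_general {n : ℕ}
    (f : EuclideanSpace ℝ (Fin n) → ℝ) (a : ℝ)
    (F : Set (EuclideanSpace ℝ (Fin n))) (hFmeas : MeasurableSet F)
    (x₀ : EuclideanSpace ℝ (Fin n)) (r : ℝ)
    (V Vt : ℝ) (hVt : 0 ≤ Vt) (hVtV : Vt ≤ V)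
    (hvolF : wVol f F = ENNReal.ofReal (V - Vt))
    (hprofile : wPer f F +
        ENNReal.ofReal ((n : ℝ) * (unitBallVol n * a) ^ ((1 : ℝ) / n) *
          Vt ^ (((n : ℝ) - 1) / n)) ≤ isoProfile f (ENNReal.ofReal V))
    (hdisj : closure F ∩ closure (closedBall x₀ r) = ∅)
    (hvolB : wVol f (closedBall x₀ r) = ENNReal.ofReal Vt)
    (hperB : wPer f (closedBall x₀ r) ≤
        ENNReal.ofReal ((n : ℝ) * (unitBallVol n * a) ^ ((1 : ℝ) / n) *
          Vt ^ (((n : ℝ) - 1) / n))) :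
    wPer f (F ∪ closedBall x₀ r) = isoProfile f (ENNReal.ofReal V) := by
  have hclosures : Disjoint (closure F) (closure (closedBall x₀ r)) :=
    disjoint_iff_inter_eq_empty.2 hdisj
  have hvol : wVol f (F ∪ closedBall x₀ r) = ENNReal.ofReal V := by
    rw [wVol_union f measurableSet_closedBall
        (hclosures.mono subset_closure subset_closure), hvolF, hvolB,
      ← ENNReal.ofReal_add (sub_nonneg.2 hVtV) hVt, sub_add_cancel]
  refine wPer_eq_isoProfile_of_le f (hFmeas.union measurableSet_closedBall) hvol ?_
  calc wPer f (F ∪ closedBall x₀ r) = wPer f F + wPer f (closedBall x₀ r) :=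
        wPer_union_of_disjoint_closure f hclosures
    _ ≤ isoProfile f (ENNReal.ofReal V) := (add_le_add_right hperB _).trans hprofile

/-- If `F` is a bounded isoperimetric set of weighted volume `V − Ṽ` with
`𝔍(V) ≥ P_f(F) + n (ωₙ a)^{1/n} Ṽ^{(n-1)/n}`, and `B` is a ball disjoint from `F` (with
disjoint closures) of weighted volume `Ṽ` and mean density at most `a`, then `F ∪ B` is an
isoperimetric set of volume `V`. -/
theorem union_with_far_ball_is_isoperimetric {n : ℕ} (hn : 2 ≤ n)
    (f : EuclideanSpace ℝ (Fin n) → ℝ) (hpos : ∀ x, 0 < f x)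
    (hlsc : LowerSemicontinuous f) (a : ℝ) (ha : 0 < a)
    (hlim : Tendsto f (cocompact (EuclideanSpace ℝ (Fin n))) (nhds a))
    (F : Set (EuclideanSpace ℝ (Fin n))) (hFmeas : MeasurableSet F)
    (hFbdd : Bornology.IsBounded F)
    (x₀ : EuclideanSpace ℝ (Fin n)) (r : ℝ) (hr : 0 < r)
    (V Vt : ℝ) (hVt : 0 ≤ Vt) (hVtV : Vt ≤ V)
    (hvolF : wVol f F = ENNReal.ofReal (V - Vt))
    (hFiso : wPer f F = isoProfile f (ENNReal.ofReal (V - Vt)))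
    (hprofile : wPer f F +
        ENNReal.ofReal ((n : ℝ) * (unitBallVol n * a) ^ ((1 : ℝ) / n) *
          Vt ^ (((n : ℝ) - 1) / n)) ≤ isoProfile f (ENNReal.ofReal V))
    (hdisj : closure F ∩ closure (closedBall x₀ r) = ∅)
    (hvolB : wVol f (closedBall x₀ r) = ENNReal.ofReal Vt)
    (hperB : wPer f (closedBall x₀ r) ≤
        ENNReal.ofReal ((n : ℝ) * (unitBallVol n * a) ^ ((1 : ℝ) / n) *
          Vt ^ (((n : ℝ) - 1) / n))) :
    wPer f (F ∪ closedBall x₀ r) = isoProfile f (ENNReal.ofReal V) :=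
  union_with_far_ball_is_isoperimetric_general f a F hFmeas x₀ r V Vt hVt hVtV hvolF hprofile hdisj
    hvolB hperB

end
end
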